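/- Define the Euclidean edge length ℓ(r_v, r_u, Θ) = √(r_v² + r_u² + 2 r_v r_u cos Θ) for radii r_v, r_u > 0 and angle Θ ∈ [0, π/2]. Then for any three radii r₁, r₂, r₃ > 0 and weights Θ₁, Θ₂, Θ₃ ∈ [0, π/2], the three lengths ℓ₁ = ℓ(r₂, r₃, Θ₁), ℓ₂ = ℓ(r₁, r₃, Θ₂), ℓ₃ = ℓ(r₁, r₂, Θ₃) satisfy the strict triangle inequalities, so they are the side lengths of a nondegenerate Euclidean triangle. -/

import Mathlib

open Real

/-- Euclidean distance between the centers of two circles of radii `a`, `b`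
meeting at angle `θ`. -/
noncomputable def circleEdgeLength (a b θ : ℝ) : ℝ :=
  Real.sqrt (a ^ 2 + b ^ 2 + 2 * a * b * Real.cos θ)

/-! For `cos Θ ∈ [0, 1]` each length satisfies `max r r' < ℓ(r, r', Θ) ≤ r + r'`.
Hence `ℓᵢ ≤ rⱼ + rₖ`, while the other two lengths exceed `rⱼ` and `rₖ` respectively. -/

theorem circleEdgeLength_comm (a b θ : ℝ) :
    circleEdgeLength a b θ = circleEdgeLength b a θ := by
  unfold circleEdgeLength
  ring_nf

theorem lt_circleEdgeLength_left {a b θ : ℝ} (ha : 0 ≤ a) (hb : 0 < b) (hθ : 0 ≤ cos θ) :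
    a < circleEdgeLength a b θ := by
  rw [circleEdgeLength, lt_sqrt ha]
  have : 0 ≤ 2 * a * b * cos θ := by positivity
  nlinarith

theorem lt_circleEdgeLength_right {a b θ : ℝ} (ha : 0 < a) (hb : 0 ≤ b) (hθ : 0 ≤ cos θ) :
    b < circleEdgeLength a b θ :=
  circleEdgeLength_comm a b θ ▸ lt_circleEdgeLength_left hb ha hθ

theorem circleEdgeLength_le_add {a b : ℝ} (θ : ℝ) (ha : 0 ≤ a) (hb : 0 ≤ b) :
    circleEdgeLength a b θ ≤ a + b := by
  rw [circleEdgeLength, sqrt_le_left (by positivity)]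
  have : 2 * a * b * cos θ ≤ 2 * a * b := mul_le_of_le_one_right (by positivity) (cos_le_one θ)
  nlinarith

theorem cos_nonneg_of_mem_Icc_zero_pi_div_two {θ : ℝ} (hθ : θ ∈ Set.Icc 0 (π / 2)) :
    0 ≤ cos θ :=
  cos_nonneg_of_neg_pi_div_two_le_of_le (by linarith [hθ.1, pi_pos]) hθ.2

/-- For positive radii and nonobtuse weights, the three circle-pattern edge
lengths satisfy the strict triangle inequalities. -/
theorem circle_pattern_triangle_inequality
    (r₁ r₂ r₃ Θ₁ Θ₂ Θ₃ : ℝ)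
    (hr₁ : 0 < r₁) (hr₂ : 0 < r₂) (hr₃ : 0 < r₃)
    (hΘ₁ : Θ₁ ∈ Set.Icc 0 (π / 2)) (hΘ₂ : Θ₂ ∈ Set.Icc 0 (π / 2))
    (hΘ₃ : Θ₃ ∈ Set.Icc 0 (π / 2)) :
    circleEdgeLength r₂ r₃ Θ₁ < circleEdgeLength r₁ r₃ Θ₂ + circleEdgeLength r₁ r₂ Θ₃ ∧
    circleEdgeLength r₁ r₃ Θ₂ < circleEdgeLength r₂ r₃ Θ₁ + circleEdgeLength r₁ r₂ Θ₃ ∧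
    circleEdgeLength r₁ r₂ Θ₃ < circleEdgeLength r₂ r₃ Θ₁ + circleEdgeLength r₁ r₃ Θ₂ := by
  have hc₁ := cos_nonneg_of_mem_Icc_zero_pi_div_two hΘ₁
  have hc₂ := cos_nonneg_of_mem_Icc_zero_pi_div_two hΘ₂
  have hc₃ := cos_nonneg_of_mem_Icc_zero_pi_div_two hΘ₃
  have upper₁ := circleEdgeLength_le_add Θ₁ hr₂.le hr₃.le
  have upper₂ := circleEdgeLength_le_add Θ₂ hr₁.le hr₃.le
  have upper₃ := circleEdgeLength_le_add Θ₃ hr₁.le hr₂.le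
  have lower₁₂ := lt_circleEdgeLength_left hr₂.le hr₃ hc₁
  have lower₁₃ := lt_circleEdgeLength_right hr₂ hr₃.le hc₁
  have lower₂₁ := lt_circleEdgeLength_left hr₁.le hr₃ hc₂
  have lower₂₃ := lt_circleEdgeLength_right hr₁ hr₃.le hc₂
  have lower₃₁ := lt_circleEdgeLength_left hr₁.le hr₂ hc₃
  have lower₃₂ := lt_circleEdgeLength_right hr₁ hr₂.le hc₃
  exact ⟨by linarith, by linarith, by linarith⟩
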